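/- arXiv:2106.07620 — 7 statements merged into one kernel-verified Lean document; each statement's English description precedes it below -/
import Mathlib

section
/- Let n ≥ 1 and let K : ℝ × ℝⁿ × ℝⁿ × ℝ → ℝ, (q⁰, q, γ, t) ↦ K(q⁰, q, γ, t), be continuously differentiable. Define H(q⁰, q, p₀, p, t) = −p₀ · K(q⁰, q, −p/p₀, t) on the region p₀ ≠ 0. Suppose q⁰, p₀ : I → ℝ and q, p : I → ℝⁿ are differentiable on an open interval I ⊆ ℝ, with p₀(t) ≠ 0 for all t ∈ I, and they satisfy Hamilton's canonical equations for H: (d/dt)q⁰ = ∂H/∂p₀, (d/dt)qᵃ = ∂H/∂pₐ, (d/dt)p₀ = −∂H/∂q⁰, (d/dt)pₐ = −∂H/∂qᵃ (partial derivatives evaluated at (q⁰(t), q(t), p₀(t), p(t), t)). Then the curve γ(t) := −p(t)/p₀(t) satisfies the non-autonomous contact Hamiltonian equations associated with K: (d/dt)qᵃ = ∂K/∂γₐ, (d/dt)γₐ = −∂K/∂qᵃ − γₐ · ∂K/∂q⁰ for a = 1, …, n, and (d/dt)q⁰ = −K + Σₐ γₐ · ∂K/∂γₐ, where K and its partial derivatives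 are evaluated at (q⁰(t), q(t), γ(t), t). -/
/-!
Put `γ = -p/p₀`. Hamilton's equations for `p₀` and `pₐ` read `ṗ₀ = p₀ ∂K/∂q⁰` and
`ṗₐ = p₀ ∂K/∂qᵃ`, and the quotient rule turns them into the equation for `γ`. Since `H` sees `pₐ`
only through `γₐ = -pₐ/p₀`, the chain rule gives `∂H/∂pₐ = ∂K/∂γₐ`. Finally `H` is homogeneous of
degree one in `(p₀, p)`, so Euler's identity gives `∂H/∂p₀ = -K + Σₐ γₐ ∂K/∂γₐ`.
-/

open Function

section PartialDerivatives

variable {𝕜 ι : Type*} [NontriviallyNormedField 𝕜] [DecidableEq ι] {G : (ι → 𝕜) → 𝕜}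

theorem deriv_neg_mul_comp_update_neg_div (p : ι → 𝕜) (a : ι) {c : 𝕜} (hc : c ≠ 0) :
    deriv (fun s => -c * G (fun j => -update p a s j / c)) (p a) =
      deriv (fun u => G (update (fun j => -p j / c) a u)) (-p a / c) := by
  have hline : ∀ s, (fun j => -update p a s j / c) = update (fun j => -p j / c) a (-c⁻¹ * s) := by
    intro s
    funext j
    by_cases hj : j = a
    · subst hj
      simp only [update_self]
      ring
    · simp [hj]
  simp_rw [hline, deriv_const_mul_field]
  rw [deriv_comp_mul_left (-c⁻¹) (fun u => G (update (fun j => -p j / c) a u)), smul_eq_mul,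
    show -c⁻¹ * p a = -p a / c by ring]
  field_simp

variable [Fintype ι]

theorem HasFDerivAt.hasDerivAt_comp_update {w : ι → 𝕜} {L : (ι → 𝕜) →L[𝕜] 𝕜}
    (hG : HasFDerivAt G L w) (i : ι) :
    HasDerivAt (fun u => G (update w i u)) (L (Pi.single i 1)) (w i) := by
  refine HasFDerivAt.comp_hasDerivAt (f := update w i) (w i) ?_ (hasDerivAt_update w i (w i))
  rwa [update_eq_self]

theorem fderiv_apply_eq_sum_deriv_update {w : ι → 𝕜} (hG : DifferentiableAt 𝕜 G w)
    (v : ι → 𝕜) : fderiv 𝕜 G w v = ∑ i, v i * deriv (fun u => G (update w i u)) (w i) := by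
  conv_lhs => rw [← Finset.univ_sum_single v, map_sum]
  refine Finset.sum_congr rfl fun i _ => ?_
  rw [(hG.hasFDerivAt.hasDerivAt_comp_update i).deriv, ← smul_eq_mul, ← map_smul,
    ← Pi.single_smul', smul_eq_mul, mul_one]

theorem deriv_neg_mul_comp_neg_div {p : ι → 𝕜} {s : 𝕜} (hs : s ≠ 0)
    (hG : DifferentiableAt 𝕜 G (fun i => -p i / s)) :
    deriv (fun r => -r * G (fun i => -p i / r)) s =
      -G (fun i => -p i / s) + ∑ i, (-p i / s) *
        deriv (fun u => G (update (fun j => -p j / s) i u)) (-p i / s) := by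
  have hcurve : HasDerivAt (fun r => fun i => -p i / r) (fun i => p i / s ^ 2) s := by
    rw [hasDerivAt_pi]
    intro i
    simpa [div_eq_mul_inv, neg_mul_neg] using (hasDerivAt_inv hs).const_mul (-p i)
  have hcomp : HasDerivAt (fun r => G (fun i => -p i / r))
      (fderiv 𝕜 G (fun i => -p i / s) (fun i => p i / s ^ 2)) s :=
    hG.hasFDerivAt.comp_hasDerivAt s hcurve
  have hprod := (hasDerivAt_id' s).fun_neg.fun_mul hcomp
  rw [hprod.deriv, fderiv_apply_eq_sum_deriv_update hG, Finset.mul_sum]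
  congr 1
  · simp
  · refine Finset.sum_congr rfl fun i _ => ?_
    field_simp

end PartialDerivatives

theorem HasDerivAt.neg_div_of_hasDerivAt_mul {𝕜 : Type*} [NontriviallyNormedField 𝕜]
    {u v : 𝕜 → 𝕜} {B C t : 𝕜}
    (hu : HasDerivAt u (v t * B) t) (hv : HasDerivAt v (v t * C) t) (hvt : v t ≠ 0) :
    HasDerivAt (fun s => -u s / v s) (-B - (-u t / v t) * C) t := by
  refine (hu.fun_neg.fun_div hv hvt).congr_deriv ?_
  field_simp

theorem symplectization_induces_contact_dynamics_general
    (n : ℕ)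
    (K : ℝ → (Fin n → ℝ) → (Fin n → ℝ) → ℝ → ℝ)
    (hK : ContDiff ℝ 1 (fun x : ℝ × (Fin n → ℝ) × (Fin n → ℝ) × ℝ =>
      K x.1 x.2.1 x.2.2.1 x.2.2.2))
    (α β : ℝ) (q0 p0 : ℝ → ℝ) (q p : ℝ → Fin n → ℝ)
    (hp0ne : ∀ t ∈ Set.Ioo α β, p0 t ≠ 0)
    -- Hamilton's equation  (d/dt)q⁰ = ∂H/∂p₀ :
    (hq0 : ∀ t ∈ Set.Ioo α β, HasDerivAt q0
      (deriv (fun s : ℝ => -s * K (q0 t) (q t) (fun i => -(p t i) / s) t) (p0 t)) t)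
    -- Hamilton's equation  (d/dt)qᵃ = ∂H/∂pₐ :
    (hq : ∀ t ∈ Set.Ioo α β, ∀ a : Fin n, HasDerivAt (fun s => q s a)
      (deriv (fun s : ℝ => -(p0 t) * K (q0 t) (q t)
        (fun j => -(Function.update (p t) a s j) / p0 t) t) (p t a)) t)
    -- Hamilton's equation  (d/dt)p₀ = -∂H/∂q⁰ :
    (hp0 : ∀ t ∈ Set.Ioo α β, HasDerivAt p0
      (-(deriv (fun s : ℝ => -(p0 t) * K s (q t) (fun j => -(p t j) / p0 t) t) (q0 t))) t)
    -- Hamilton's equation  (d/dt)pₐ = -∂H/∂qᵃ :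
    (hp : ∀ t ∈ Set.Ioo α β, ∀ a : Fin n, HasDerivAt (fun s => p s a)
      (-(deriv (fun s : ℝ => -(p0 t) * K (q0 t) (Function.update (q t) a s)
        (fun j => -(p t j) / p0 t) t) (q t a))) t) :
    ∀ t ∈ Set.Ioo α β,
      -- (d/dt)qᵃ = ∂K/∂γₐ
      (∀ a : Fin n, HasDerivAt (fun s => q s a)
        (deriv (fun s : ℝ => K (q0 t) (q t)
            (Function.update (fun j => -(p t j) / p0 t) a s) t)
          (-(p t a) / p0 t)) t) ∧
      -- (d/dt)γₐ = -∂K/∂qᵃ - γₐ · ∂K/∂q⁰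
      (∀ a : Fin n, HasDerivAt (fun s => -(p s a) / p0 s)
        (-(deriv (fun s : ℝ => K (q0 t) (Function.update (q t) a s)
              (fun j => -(p t j) / p0 t) t) (q t a))
          - (-(p t a) / p0 t) *
            deriv (fun s : ℝ => K s (q t) (fun j => -(p t j) / p0 t) t) (q0 t)) t) ∧
      -- (d/dt)q⁰ = -K + Σₐ γₐ ∂K/∂γₐ
      HasDerivAt q0
        (-(K (q0 t) (q t) (fun j => -(p t j) / p0 t) t)
          + ∑ a : Fin n, (-(p t a) / p0 t) *
            deriv (fun s : ℝ => K (q0 t) (q t)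
                (Function.update (fun j => -(p t j) / p0 t) a s) t)
              (-(p t a) / p0 t)) t := by
  intro t ht
  have hp0t : p0 t ≠ 0 := hp0ne t ht
  have hKγ : DifferentiableAt ℝ (fun y => K (q0 t) (q t) y t) (fun j => -p t j / p0 t) :=
    (hK.differentiable one_ne_zero).differentiableAt.comp
      (g := fun x : ℝ × (Fin n → ℝ) × (Fin n → ℝ) × ℝ => K x.1 x.2.1 x.2.2.1 x.2.2.2)
      (f := fun y => (q0 t, q t, y, t)) _ (by fun_prop)
  refine ⟨fun a => ?_, fun a => ?_, ?_⟩
  · rw [← deriv_neg_mul_comp_update_neg_div (G := fun y => K (q0 t) (q t) y t) _ a hp0t]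
    exact hq t ht a
  · have hpa := hp t ht a
    have hp0' := hp0 t ht
    rw [deriv_const_mul_field, neg_mul, neg_neg] at hpa hp0'
    exact hpa.neg_div_of_hasDerivAt_mul hp0' hp0t
  · rw [← deriv_neg_mul_comp_neg_div hp0t hKγ]
    exact hq0 t ht

/-- **Symplectization induces contact dynamics (Proposition 1).**
If `(q⁰, q, p₀, p)` solves Hamilton's canonical equations for
`H(q⁰, q, p₀, p, t) = -p₀ · K(q⁰, q, -p/p₀, t)` with `p₀ ≠ 0`, then
`(q⁰, q, γ) := (q⁰, q, -p/p₀)` solves the non-autonomous contact Hamiltonian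
equations associated with `K`. -/
theorem symplectization_induces_contact_dynamics
    (n : ℕ) (hn : 1 ≤ n)
    (K : ℝ → (Fin n → ℝ) → (Fin n → ℝ) → ℝ → ℝ)
    (hK : ContDiff ℝ 1 (fun x : ℝ × (Fin n → ℝ) × (Fin n → ℝ) × ℝ =>
      K x.1 x.2.1 x.2.2.1 x.2.2.2))
    (α β : ℝ) (q0 p0 : ℝ → ℝ) (q p : ℝ → Fin n → ℝ)
    (hp0ne : ∀ t ∈ Set.Ioo α β, p0 t ≠ 0)
    -- Hamilton's equation  (d/dt)q⁰ = ∂H/∂p₀ :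
    (hq0 : ∀ t ∈ Set.Ioo α β, HasDerivAt q0
      (deriv (fun s : ℝ => -s * K (q0 t) (q t) (fun i => -(p t i) / s) t) (p0 t)) t)
    -- Hamilton's equation  (d/dt)qᵃ = ∂H/∂pₐ :
    (hq : ∀ t ∈ Set.Ioo α β, ∀ a : Fin n, HasDerivAt (fun s => q s a)
      (deriv (fun s : ℝ => -(p0 t) * K (q0 t) (q t)
        (fun j => -(Function.update (p t) a s j) / p0 t) t) (p t a)) t)
    -- Hamilton's equation  (d/dt)p₀ = -∂H/∂q⁰ :
    (hp0 : ∀ t ∈ Set.Ioo α β, HasDerivAt p0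
      (-(deriv (fun s : ℝ => -(p0 t) * K s (q t) (fun j => -(p t j) / p0 t) t) (q0 t))) t)
    -- Hamilton's equation  (d/dt)pₐ = -∂H/∂qᵃ :
    (hp : ∀ t ∈ Set.Ioo α β, ∀ a : Fin n, HasDerivAt (fun s => p s a)
      (-(deriv (fun s : ℝ => -(p0 t) * K (q0 t) (Function.update (q t) a s)
        (fun j => -(p t j) / p0 t) t) (q t a))) t) :
    ∀ t ∈ Set.Ioo α β,
      -- (d/dt)qᵃ = ∂K/∂γₐ
      (∀ a : Fin n, HasDerivAt (fun s => q s a)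
        (deriv (fun s : ℝ => K (q0 t) (q t)
            (Function.update (fun j => -(p t j) / p0 t) a s) t)
          (-(p t a) / p0 t)) t) ∧
      -- (d/dt)γₐ = -∂K/∂qᵃ - γₐ · ∂K/∂q⁰
      (∀ a : Fin n, HasDerivAt (fun s => -(p s a) / p0 s)
        (-(deriv (fun s : ℝ => K (q0 t) (Function.update (q t) a s)
              (fun j => -(p t j) / p0 t) t) (q t a))
          - (-(p t a) / p0 t) *
            deriv (fun s : ℝ => K s (q t) (fun j => -(p t j) / p0 t) t) (q0 t)) t) ∧
      -- (d/dt)q⁰ = -K + Σₐ γₐ ∂K/∂γₐ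
      HasDerivAt q0
        (-(K (q0 t) (q t) (fun j => -(p t j) / p0 t) t)
          + ∑ a : Fin n, (-(p t a) / p0 t) *
            deriv (fun s : ℝ => K (q0 t) (q t)
                (Function.update (fun j => -(p t j) / p0 t) a s) t)
              (-(p t a) / p0 t)) t :=
  symplectization_induces_contact_dynamics_general n K hK α β q0 p0 q p hp0ne hq0 hq hp0 hp
end

section
/- Let d ≥ 1, σ ≥ 2, and let f : ℝ^d → ℝ be continuously differentiable with gradient ∇f. Set Γ₀(t; σ) = σ² t^{σ−2} and Γ₁(t; σ) = (2σ+1)/t for t > 0. Suppose q⁰, p₀ : (0, ∞) → ℝ and q, p : (0, ∞) → ℝ^d are differentiable, p₀(t) ≠ 0 for all t > 0, and they satisfy the canonical equations of the Hamiltonian H^{ZZ}(q⁰, q, p₀, p, t) = −p₀ [½ Σₐ pₐ²/p₀² + Γ₀(t; σ) f(q) + Γ₁(t; σ) q⁰], namely: (d/dt)q⁰ = ½ Σ_b p_b²/p₀² − Γ₀ f(q) − Γ₁ q⁰, (d/dt)p₀ = Γ₁ p₀, (d/dt)qᵃ = −pₐ/p₀, and (d/dt)pₐ = p₀ Γ₀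 (∂f/∂qᵃ)(q) for a = 1, …, d. Then q is twice differentiable and satisfies Zhang's equation: q̈(t) + Γ₁(t; σ) q̇(t) + Γ₀(t; σ) ∇f(q(t)) = 0 for all t > 0. -/
/-!
Eliminating the momenta: from `q̇ = -p/p₀` the velocity is a quotient of differentiable
functions, and the quotient rule together with `ṗ = p₀ F` and `ṗ₀ = γ p₀` gives
`q̈ = -F + γ p/p₀ = -γ q̇ - F`, which for `γ = Γ₁`, `F = Γ₀ ∂ₐf(q)` is Zhang's equation.
-/

open Filter Topology

theorem hasDerivAt_deriv_of_hasDerivAt_neg_div {x p p₀ : ℝ → ℝ} {t γ F : ℝ}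
    (hx : ∀ᶠ s in 𝓝 t, HasDerivAt x (-p s / p₀ s) s)
    (hp : HasDerivAt p (p₀ t * F) t) (hp₀ : HasDerivAt p₀ (γ * p₀ t) t) (hne : p₀ t ≠ 0) :
    HasDerivAt (deriv x) (-(γ * deriv x t) - F) t := by
  have hvel : deriv x =ᶠ[𝓝 t] fun s => -p s / p₀ s := hx.mono fun _ hs => hs.deriv
  have hquot := (hp.neg.div hp₀ hne).congr_of_eventuallyEq hvel
  refine hquot.congr_deriv ?_
  rw [hvel.eq_of_nhds, Pi.neg_apply]
  field_simp
  ring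

theorem hamiltonian_HZZ_gives_zhang_equation_general
    (d : ℕ) (σ : ℝ)
    (f : (Fin d → ℝ) → ℝ)
    (p0 : ℝ → ℝ) (q p : ℝ → Fin d → ℝ)
    (hp0ne : ∀ t ∈ Set.Ioi (0 : ℝ), p0 t ≠ 0)
    -- (d/dt)p₀ = Γ₁ p₀
    (hp0 : ∀ t ∈ Set.Ioi (0 : ℝ), HasDerivAt p0 (((2 * σ + 1) / t) * p0 t) t)
    -- (d/dt)qᵃ = −pₐ/p₀
    (hq : ∀ t ∈ Set.Ioi (0 : ℝ), ∀ a : Fin d,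
      HasDerivAt (fun s => q s a) (-(p t a) / p0 t) t)
    -- (d/dt)pₐ = p₀ Γ₀ (∂f/∂qᵃ)(q)
    (hp : ∀ t ∈ Set.Ioi (0 : ℝ), ∀ a : Fin d,
      HasDerivAt (fun s => p s a)
        (p0 t * (σ ^ 2 * t ^ (σ - 2)) *
          deriv (fun s : ℝ => f (Function.update (q t) a s)) (q t a)) t) :
    -- Zhang's equation: q̈ᵃ + Γ₁ q̇ᵃ + Γ₀ (∂f/∂qᵃ)(q) = 0
    ∀ t ∈ Set.Ioi (0 : ℝ), ∀ a : Fin d,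
      HasDerivAt (fun s => deriv (fun u => q u a) s)
        (-(((2 * σ + 1) / t) * deriv (fun u => q u a) t)
          - σ ^ 2 * t ^ (σ - 2) *
            deriv (fun s : ℝ => f (Function.update (q t) a s)) (q t a)) t := by
  intro t ht a
  have hq_near : ∀ᶠ s in 𝓝 t, HasDerivAt (fun u => q u a) (-(p s a) / p0 s) s :=
    eventually_of_mem (Ioi_mem_nhds ht) fun s hs => hq s hs a
  exact hasDerivAt_deriv_of_hasDerivAt_neg_div hq_near
    ((hp t ht a).congr_deriv (mul_assoc _ _ _)) (hp0 t ht) (hp0ne t ht)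

/-- **Theorem 3 made explicit.** A solution of the canonical equations of the
Hamiltonian `H^{ZZ}(q⁰,q,p₀,p,t) = -p₀ [½ Σₐ pₐ²/p₀² + Γ₀(t;σ) f(q) + Γ₁(t;σ) q⁰]`,
with `Γ₀(t;σ) = σ² t^(σ-2)`, `Γ₁(t;σ) = (2σ+1)/t` and `p₀ ≠ 0`, yields a twice
differentiable solution `q` of Zhang's equation on `(0, ∞)`. -/
theorem hamiltonian_HZZ_gives_zhang_equation
    (d : ℕ) (hd : 1 ≤ d) (σ : ℝ) (hσ : 2 ≤ σ)
    (f : (Fin d → ℝ) → ℝ) (hf : ContDiff ℝ 1 f)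
    (q0 p0 : ℝ → ℝ) (q p : ℝ → Fin d → ℝ)
    (hp0ne : ∀ t ∈ Set.Ioi (0 : ℝ), p0 t ≠ 0)
    -- (d/dt)q⁰ = ½ Σ_b p_b²/p₀² − Γ₀ f(q) − Γ₁ q⁰
    (hq0 : ∀ t ∈ Set.Ioi (0 : ℝ), HasDerivAt q0
      ((1 / 2) * ∑ b : Fin d, (p t b) ^ 2 / (p0 t) ^ 2
        - σ ^ 2 * t ^ (σ - 2) * f (q t)
        - ((2 * σ + 1) / t) * q0 t) t)
    -- (d/dt)p₀ = Γ₁ p₀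
    (hp0 : ∀ t ∈ Set.Ioi (0 : ℝ), HasDerivAt p0 (((2 * σ + 1) / t) * p0 t) t)
    -- (d/dt)qᵃ = −pₐ/p₀
    (hq : ∀ t ∈ Set.Ioi (0 : ℝ), ∀ a : Fin d,
      HasDerivAt (fun s => q s a) (-(p t a) / p0 t) t)
    -- (d/dt)pₐ = p₀ Γ₀ (∂f/∂qᵃ)(q)
    (hp : ∀ t ∈ Set.Ioi (0 : ℝ), ∀ a : Fin d,
      HasDerivAt (fun s => p s a)
        (p0 t * (σ ^ 2 * t ^ (σ - 2)) *
          deriv (fun s : ℝ => f (Function.update (q t) a s)) (q t a)) t) :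
    -- Zhang's equation: q̈ᵃ + Γ₁ q̇ᵃ + Γ₀ (∂f/∂qᵃ)(q) = 0
    ∀ t ∈ Set.Ioi (0 : ℝ), ∀ a : Fin d,
      HasDerivAt (fun s => deriv (fun u => q u a) s)
        (-(((2 * σ + 1) / t) * deriv (fun u => q u a) t)
          - σ ^ 2 * t ^ (σ - 2) *
            deriv (fun s : ℝ => f (Function.update (q t) a s)) (q t a)) t :=
  hamiltonian_HZZ_gives_zhang_equation_general d σ f p0 q p hp0ne hp0 hq hp
end

section
/- Let d ≥ 1, let Ȟ : ℝ^d × ℝ^d × ℝ → ℝ, (q, p, t) ↦ Ȟ(q, p, t), be continuously differentiable, let I ⊆ ℝ be an open interval, let Γ : I → ℝ be continuous, and let p₀ˢ : I → ℝ be differentiable with (d/dt)p₀ˢ(t) = Γ(t) p₀ˢ(t) on I. Define H₁(q⁰, q, p₀, p, t) = −p₀ [Ȟ(q, p, t) + Γ(t) q⁰]. Suppose q⁰, p₀ : I → ℝ and q, p : I → ℝ^d are differentiable and satisfy the canonical equations of H₁: (d/dt)q⁰ = −Ȟ(q, p, t) − Γ(t) q⁰, (d/dt)p₀ = Γ(t)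 p₀, (d/dt)qᵃ = −p₀ · (∂Ȟ/∂pₐ)(q, p, t), (d/dt)pₐ = p₀ · (∂Ȟ/∂qᵃ)(q, p, t) for a = 1, …, d. If moreover p₀(t₀) = p₀ˢ(t₀) for some t₀ ∈ I, then p₀(t) = p₀ˢ(t) for all t ∈ I, and (q, p) satisfies the canonical equations of the reduced Hamiltonian H₂(q, p, t) = −p₀ˢ(t) Ȟ(q, p, t), namely (d/dt)qᵃ = −p₀ˢ(t) · (∂Ȟ/∂pₐ)(q, p, t) and (d/dt)pₐ = p₀ˢ(t) · (∂Ȟ/∂qᵃ)(q, p, t). -/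
/-!
Both `p₀` and `p₀ˢ` solve the linear equation `ẏ = Γ(t) y`, whose right-hand side is Lipschitz
in `y` with constant `sup |Γ|` on every compact subinterval of `I`; by uniqueness of solutions
they agree on `I`. Substituting `p₀ = p₀ˢ` into the canonical equations of `H₁` for `(q, p)` gives
those of `H₂`.
-/

open Set NNReal

variable {E : Type*} [NormedAddCommGroup E] [NormedSpace ℝ E] {Γ : ℝ → ℝ} {f g : ℝ → E}

theorem linear_ODE_solution_unique_of_nnnorm_le {a b t₀ : ℝ} {K : ℝ≥0}
    (hK : ∀ t ∈ Ioo a b, ‖Γ t‖₊ ≤ K) (ht₀ : t₀ ∈ Ioo a b)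
    (hf : ∀ t ∈ Ioo a b, HasDerivAt f (Γ t • f t) t)
    (hg : ∀ t ∈ Ioo a b, HasDerivAt g (Γ t • g t) t) (heq : f t₀ = g t₀) :
    EqOn f g (Ioo a b) :=
  ODE_solution_unique_of_mem_Ioo (v := fun t x => Γ t • x) (s := fun _ => univ)
    (fun t ht => ((lipschitzWith_smul (Γ t)).weaken (hK t ht)).lipschitzOnWith) ht₀
    (fun t ht => ⟨hf t ht, mem_univ _⟩) (fun t ht => ⟨hg t ht, mem_univ _⟩) heq

theorem linear_ODE_solution_unique_of_continuousOn {α β t₀ : ℝ}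
    (hΓ : ContinuousOn Γ (Ioo α β)) (ht₀ : t₀ ∈ Ioo α β)
    (hf : ∀ t ∈ Ioo α β, HasDerivAt f (Γ t • f t) t)
    (hg : ∀ t ∈ Ioo α β, HasDerivAt g (Γ t • g t) t) (heq : f t₀ = g t₀) :
    EqOn f g (Ioo α β) := by
  intro t ht
  obtain ⟨a, hαa, ha⟩ := exists_between (lt_min ht₀.1 ht.1)
  obtain ⟨b, hb, hbβ⟩ := exists_between (max_lt ht₀.2 ht.2)
  have hsub : Icc a b ⊆ Ioo α β := Icc_subset_Ioo hαa hbβ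
  obtain ⟨K, hK⟩ := (isCompact_Icc.image_of_continuousOn (hΓ.mono hsub).nnnorm).bddAbove
  have hmem {s : ℝ} (has : min t₀ t ≤ s) (hsb : s ≤ max t₀ t) : s ∈ Ioo a b :=
    ⟨ha.trans_le has, hsb.trans_lt hb⟩
  refine linear_ODE_solution_unique_of_nnnorm_le
    (fun s hs => hK ⟨s, Ioo_subset_Icc_self hs, rfl⟩)
    (hmem (min_le_left _ _) (le_max_left _ _))
    (fun s hs => hf s (hsub (Ioo_subset_Icc_self hs)))
    (fun s hs => hg s (hsub (Ioo_subset_Icc_self hs))) heq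
    (hmem (min_le_right _ _) (le_max_right _ _))

theorem reduced_hamiltonian_system_general
    (d : ℕ)
    (Hc : (Fin d → ℝ) → (Fin d → ℝ) → ℝ → ℝ)
    (α β : ℝ) (Γ : ℝ → ℝ) (hΓ : ContinuousOn Γ (Set.Ioo α β))
    (p0s : ℝ → ℝ)
    (hp0s : ∀ t ∈ Set.Ioo α β, HasDerivAt p0s (Γ t * p0s t) t)
    (p0 : ℝ → ℝ) (q p : ℝ → Fin d → ℝ)
    -- canonical equations of H₁:
    (hp0 : ∀ t ∈ Set.Ioo α β, HasDerivAt p0 (Γ t * p0 t) t)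
    (hq : ∀ t ∈ Set.Ioo α β, ∀ a : Fin d, HasDerivAt (fun s => q s a)
      (-(p0 t) * deriv (fun s : ℝ => Hc (q t) (Function.update (p t) a s) t) (p t a)) t)
    (hp : ∀ t ∈ Set.Ioo α β, ∀ a : Fin d, HasDerivAt (fun s => p s a)
      (p0 t * deriv (fun s : ℝ => Hc (Function.update (q t) a s) (p t) t) (q t a)) t)
    -- agreement at one point:
    (t0 : ℝ) (ht0 : t0 ∈ Set.Ioo α β) (hagree : p0 t0 = p0s t0) :
    (∀ t ∈ Set.Ioo α β, p0 t = p0s t) ∧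
    -- canonical equations of the reduced Hamiltonian H₂ = -p₀ˢ(t) Ȟ:
    (∀ t ∈ Set.Ioo α β, ∀ a : Fin d,
      HasDerivAt (fun s => q s a)
        (-(p0s t) * deriv (fun s : ℝ => Hc (q t) (Function.update (p t) a s) t) (p t a)) t ∧
      HasDerivAt (fun s => p s a)
        (p0s t * deriv (fun s : ℝ => Hc (Function.update (q t) a s) (p t) t) (q t a)) t) := by
  have hp0_eq : EqOn p0 p0s (Ioo α β) :=
    linear_ODE_solution_unique_of_continuousOn hΓ ht0 hp0 hp0s hagree
  refine ⟨fun t ht => hp0_eq ht, fun t ht a => ?_⟩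
  rw [← hp0_eq ht]
  exact ⟨hq t ht a, hp t ht a⟩

/-- **Proposition 4 (reduction of the Hamiltonian).** If `(q⁰, q, p₀, p)` solves
the canonical equations of `H₁(q⁰,q,p₀,p,t) = -p₀ [Ȟ(q,p,t) + Γ(t) q⁰]` on an
open interval `I`, and `p₀` agrees at one point `t₀ ∈ I` with a solution `p₀ˢ`
of `ṗ₀ = Γ(t) p₀`, then `p₀ = p₀ˢ` on `I` and `(q, p)` solves the canonical
equations of the reduced Hamiltonian `H₂(q,p,t) = -p₀ˢ(t) Ȟ(q,p,t)`. -/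
theorem reduced_hamiltonian_system
    (d : ℕ) (hd : 1 ≤ d)
    (Hc : (Fin d → ℝ) → (Fin d → ℝ) → ℝ → ℝ)
    (hHc : ContDiff ℝ 1 (fun x : (Fin d → ℝ) × (Fin d → ℝ) × ℝ =>
      Hc x.1 x.2.1 x.2.2))
    (α β : ℝ) (Γ : ℝ → ℝ) (hΓ : ContinuousOn Γ (Set.Ioo α β))
    (p0s : ℝ → ℝ)
    (hp0s : ∀ t ∈ Set.Ioo α β, HasDerivAt p0s (Γ t * p0s t) t)
    (q0 p0 : ℝ → ℝ) (q p : ℝ → Fin d → ℝ)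
    -- canonical equations of H₁:
    (hq0 : ∀ t ∈ Set.Ioo α β, HasDerivAt q0
      (-(Hc (q t) (p t) t) - Γ t * q0 t) t)
    (hp0 : ∀ t ∈ Set.Ioo α β, HasDerivAt p0 (Γ t * p0 t) t)
    (hq : ∀ t ∈ Set.Ioo α β, ∀ a : Fin d, HasDerivAt (fun s => q s a)
      (-(p0 t) * deriv (fun s : ℝ => Hc (q t) (Function.update (p t) a s) t) (p t a)) t)
    (hp : ∀ t ∈ Set.Ioo α β, ∀ a : Fin d, HasDerivAt (fun s => p s a)
      (p0 t * deriv (fun s : ℝ => Hc (Function.update (q t) a s) (p t) t) (q t a)) t)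
    -- agreement at one point:
    (t0 : ℝ) (ht0 : t0 ∈ Set.Ioo α β) (hagree : p0 t0 = p0s t0) :
    (∀ t ∈ Set.Ioo α β, p0 t = p0s t) ∧
    -- canonical equations of the reduced Hamiltonian H₂ = -p₀ˢ(t) Ȟ:
    (∀ t ∈ Set.Ioo α β, ∀ a : Fin d,
      HasDerivAt (fun s => q s a)
        (-(p0s t) * deriv (fun s : ℝ => Hc (q t) (Function.update (p t) a s) t) (p t a)) t ∧
      HasDerivAt (fun s => p s a)
        (p0s t * deriv (fun s : ℝ => Hc (Function.update (q t) a s) (p t) t) (q t a)) t) :=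
  reduced_hamiltonian_system_general d Hc α β Γ hΓ p0s hp0s p0 q p hp0 hq hp t0 ht0 hagree
end

section
/- Let d ≥ 1, σ ≥ 2, c ≠ 0, and let f : ℝ^d → ℝ be continuously differentiable with gradient ∇f. Set p₀(t; σ) = c · t^{2σ+1}, Γ₀(t; σ) = σ² t^{σ−2}, and Γ₁(t; σ) = (2σ+1)/t for t > 0. Suppose q, p : (0, ∞) → ℝ^d are differentiable and satisfy the canonical equations of the reduced Hamiltonian H^Z(q, p, t) = −(1/(2 p₀(t; σ))) Σₐ pₐ² − p₀(t; σ) Γ₀(t; σ) f(q), namely (d/dt)qᵃ(t) = −pₐ(t)/p₀(t; σ) and (d/dt)pₐ(t) = p₀(t; σ) Γ₀(t; σ) (∂f/∂qᵃ)(q(t)) for all t > 0 and a = 1, …, d. Then q is twice differentiable and satisfies Zhang's equation: q̈(t) + Γ₁(t; σ) q̇(t) + Γ₀(t; σ) ∇f(q(t)) = 0 for all t > 0. -/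
/-!
Eliminating the momentum: the first canonical equation says `q̇ = -p / p₀`, so differentiating
it once more and substituting the second canonical equation gives
`q̈ = -ṗ / p₀ - (ṗ₀ / p₀) q̇ = -Γ₀ ∂f - (ṗ₀ / p₀) q̇`, and for `p₀ = c t^(2σ+1)` the logarithmic
derivative `ṗ₀ / p₀` is exactly `Γ₁ = (2σ+1)/t`.
-/

open Filter Topology

theorem hasDerivAt_deriv_of_eventually_hasDerivAt {E : Type*} [NormedAddCommGroup E]
    [NormedSpace ℝ E] {x v : ℝ → E} {v' : E} {t : ℝ} (hx : ∀ᶠ s in 𝓝 t, HasDerivAt x (v s) s)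
    (hv : HasDerivAt v v' t) : HasDerivAt (deriv x) v' t :=
  hv.congr_of_eventuallyEq (hx.mono fun _ hs => hs.deriv)

theorem HasDerivAt.neg_div_of_hasDerivAt {p m : ℝ → ℝ} {p' m' t : ℝ}
    (hp : HasDerivAt p p' t) (hm : HasDerivAt m m' t) (hmt : m t ≠ 0) :
    HasDerivAt (fun s => -p s / m s) (-(m' / m t * (-p t / m t)) - p' / m t) t := by
  refine (hp.neg.div hm hmt).congr_deriv ?_
  simp only [Pi.neg_apply]
  field_simp
  ring

theorem hasDerivAt_const_mul_rpow (c r : ℝ) {t : ℝ} (ht : t ≠ 0) :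
    HasDerivAt (fun s : ℝ => c * s ^ r) (r / t * (c * t ^ r)) t := by
  refine ((Real.hasDerivAt_rpow_const (Or.inl ht)).const_mul c).congr_deriv ?_
  rw [Real.rpow_sub_one ht]
  ring

theorem reduced_hamiltonian_HZ_gives_zhang_equation_general
    (d : ℕ) (σ c : ℝ) (hc : c ≠ 0)
    (f : (Fin d → ℝ) → ℝ)
    (q p : ℝ → Fin d → ℝ)
    -- (d/dt)qᵃ = −pₐ/p₀(t;σ)
    (hq : ∀ t ∈ Set.Ioi (0 : ℝ), ∀ a : Fin d,
      HasDerivAt (fun s => q s a) (-(p t a) / (c * t ^ (2 * σ + 1))) t)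
    -- (d/dt)pₐ = p₀(t;σ) Γ₀(t;σ) (∂f/∂qᵃ)(q)
    (hp : ∀ t ∈ Set.Ioi (0 : ℝ), ∀ a : Fin d,
      HasDerivAt (fun s => p s a)
        (c * t ^ (2 * σ + 1) * (σ ^ 2 * t ^ (σ - 2)) *
          deriv (fun s : ℝ => f (Function.update (q t) a s)) (q t a)) t) :
    -- Zhang's equation: q̈ᵃ + Γ₁ q̇ᵃ + Γ₀ (∂f/∂qᵃ)(q) = 0
    ∀ t ∈ Set.Ioi (0 : ℝ), ∀ a : Fin d,
      HasDerivAt (fun s => deriv (fun u => q u a) s)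
        (-(((2 * σ + 1) / t) * deriv (fun u => q u a) t)
          - σ ^ 2 * t ^ (σ - 2) *
            deriv (fun s : ℝ => f (Function.update (q t) a s)) (q t a)) t := by
  intro t ht a
  have ht0 : t ≠ 0 := ne_of_gt ht
  have ht_pow : t ^ (2 * σ + 1) ≠ 0 := (Real.rpow_pos_of_pos ht _).ne'
  have hq_near : ∀ᶠ s in 𝓝 t, HasDerivAt (fun u => q u a) (-p s a / (c * s ^ (2 * σ + 1))) s :=
    eventually_of_mem (Ioi_mem_nhds ht) fun s hs => hq s hs a
  have hq_accel := hasDerivAt_deriv_of_eventually_hasDerivAt hq_near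
    ((hp t ht a).neg_div_of_hasDerivAt (hasDerivAt_const_mul_rpow c _ ht0) (mul_ne_zero hc ht_pow))
  refine hq_accel.congr_deriv ?_
  rw [(hq t ht a).deriv]
  field_simp

/-- **Proposition 5 made explicit.** A solution of the canonical equations of the
reduced Hamiltonian `H^Z(q,p,t) = -(1/(2 p₀(t;σ))) Σₐ pₐ² - p₀(t;σ) Γ₀(t;σ) f(q)`,
where `p₀(t;σ) = c t^(2σ+1)` with `c ≠ 0` and `Γ₀(t;σ) = σ² t^(σ-2)`, yields a
twice differentiable solution `q` of Zhang's equation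
`q̈ + Γ₁(t;σ) q̇ + Γ₀(t;σ) ∇f(q) = 0` on `(0, ∞)` with `Γ₁(t;σ) = (2σ+1)/t`. -/
theorem reduced_hamiltonian_HZ_gives_zhang_equation
    (d : ℕ) (hd : 1 ≤ d) (σ c : ℝ) (hσ : 2 ≤ σ) (hc : c ≠ 0)
    (f : (Fin d → ℝ) → ℝ) (hf : ContDiff ℝ 1 f)
    (q p : ℝ → Fin d → ℝ)
    -- (d/dt)qᵃ = −pₐ/p₀(t;σ)
    (hq : ∀ t ∈ Set.Ioi (0 : ℝ), ∀ a : Fin d,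
      HasDerivAt (fun s => q s a) (-(p t a) / (c * t ^ (2 * σ + 1))) t)
    -- (d/dt)pₐ = p₀(t;σ) Γ₀(t;σ) (∂f/∂qᵃ)(q)
    (hp : ∀ t ∈ Set.Ioi (0 : ℝ), ∀ a : Fin d,
      HasDerivAt (fun s => p s a)
        (c * t ^ (2 * σ + 1) * (σ ^ 2 * t ^ (σ - 2)) *
          deriv (fun s : ℝ => f (Function.update (q t) a s)) (q t a)) t) :
    -- Zhang's equation: q̈ᵃ + Γ₁ q̇ᵃ + Γ₀ (∂f/∂qᵃ)(q) = 0
    ∀ t ∈ Set.Ioi (0 : ℝ), ∀ a : Fin d,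
      HasDerivAt (fun s => deriv (fun u => q u a) s)
        (-(((2 * σ + 1) / t) * deriv (fun u => q u a) t)
          - σ ^ 2 * t ^ (σ - 2) *
            deriv (fun s : ℝ => f (Function.update (q t) a s)) (q t a)) t :=
  reduced_hamiltonian_HZ_gives_zhang_equation_general d σ c hc f q p hq hp
end

section
/- Let d ≥ 1, let I ⊆ (0, ∞) be an open interval, let Γ₀, Γ₁ : I → ℝ be continuous, let f : ℝ^d → ℝ be continuously differentiable with gradient ∇f, and let p₀ : I → ℝ be differentiable, nowhere vanishing on I, with (d/dt)p₀(t) = Γ₁(t) p₀(t). Then a twice-differentiable x : I → ℝ^d satisfies the ODE ẍ(t) + Γ₁(t) ẋ(t) + Γ₀(t) ∇f(x(t)) = 0 on I if and only if the pair (q, p) := (x, −p₀ · ẋ) satisfies the Hamiltonian system (d/dt)qᵃ(t) = −pₐ(t)/p₀(t) and (d/dt)pₐ(t) = p₀(t) Γ₀(t) (∂f/∂qᵃ)(q(t)) on I for a = 1, …, d. -/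
open Topology

section

variable {𝕜 : Type*} [NontriviallyNormedField 𝕜] {g u : 𝕜 → 𝕜} {g' u' w t : 𝕜}

/-- Near `t` the factor `u` is the quotient `(g * u) / g`, so it inherits a derivative. -/
theorem HasDerivAt.of_mul_left (hg : HasDerivAt g g' t) (hgt : g t ≠ 0)
    (hgu : HasDerivAt (fun s => g s * u s) w t) :
    HasDerivAt u ((w - g' * u t) / g t) t := by
  have hu : u =ᶠ[𝓝 t] fun s => g s * u s / g s :=
    (hg.continuousAt.eventually_ne hgt).mono fun s hs => (mul_div_cancel_left₀ _ hs).symm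
  have hquot : (w * g t - g t * u t * g') / g t ^ 2 = (w - g' * u t) / g t := by
    field_simp
  simpa only [hquot] using (hgu.div hg hgt).congr_of_eventuallyEq hu

theorem hasDerivAt_mul_iff_of_ne_zero (hg : HasDerivAt g g' t) (hgt : g t ≠ 0) :
    HasDerivAt (fun s => g s * u s) (g' * u t + g t * u') t ↔ HasDerivAt u u' t := by
  refine ⟨fun hgu => ?_, hg.mul⟩
  convert hg.of_mul_left hgt hgu using 1
  field_simp
  ring

end

theorem general_second_order_ode_as_hamiltonian_system_general
    (d : ℕ) (α β : ℝ)
    (Γ₀ Γ₁ : ℝ → ℝ)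
    (f : (Fin d → ℝ) → ℝ)
    (p0 : ℝ → ℝ)
    (hp0ne : ∀ t ∈ Set.Ioo α β, p0 t ≠ 0)
    (hp0 : ∀ t ∈ Set.Ioo α β, HasDerivAt p0 (Γ₁ t * p0 t) t)
    (x : ℝ → Fin d → ℝ)
    (hx1 : ∀ t ∈ Set.Ioo α β, ∀ a : Fin d, DifferentiableAt ℝ (fun s => x s a) t) :
    -- the ODE  ẍ + Γ₁ ẋ + Γ₀ ∇f(x) = 0  on I …
    (∀ t ∈ Set.Ioo α β, ∀ a : Fin d,
      HasDerivAt (fun s => deriv (fun u => x u a) s)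
        (-(Γ₁ t * deriv (fun u => x u a) t)
          - Γ₀ t * deriv (fun s : ℝ => f (Function.update (x t) a s)) (x t a)) t)
    ↔
    -- … iff  (q, p) = (x, -p₀ ẋ)  solves the Hamiltonian system
    (∀ t ∈ Set.Ioo α β, ∀ a : Fin d,
      HasDerivAt (fun s => x s a)
        (-(-(p0 t) * deriv (fun u => x u a) t) / p0 t) t ∧
      HasDerivAt (fun s => -(p0 s) * deriv (fun u => x u a) s)
        (p0 t * Γ₀ t *
          deriv (fun s : ℝ => f (Function.update (x t) a s)) (x t a)) t) := by
  refine forall₂_congr fun t ht => forall_congr' fun a => ?_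
  set v := deriv fun u => x u a
  set F := deriv (fun s : ℝ => f (Function.update (x t) a s)) (x t a)
  have hq : HasDerivAt (fun s => x s a) (-(-(p0 t) * v t) / p0 t) t := by
    rw [neg_mul, neg_neg, mul_div_cancel_left₀ _ (hp0ne t ht)]
    exact (hx1 t ht a).hasDerivAt
  have hp : -(Γ₁ t * p0 t) * v t + -p0 t * (-(Γ₁ t * v t) - Γ₀ t * F) =
      p0 t * Γ₀ t * F := by
    ring
  rw [and_iff_right hq, ← hp]
  exact (hasDerivAt_mul_iff_of_ne_zero (hp0 t ht).neg (neg_ne_zero.2 (hp0ne t ht))).symm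

/-- **Corollary after Theorem 3.** For continuous `Γ₀, Γ₁` on an open interval
`I ⊆ (0, ∞)` and a nowhere vanishing solution `p₀` of `ṗ₀ = Γ₁(t) p₀`, a twice
differentiable curve `x` satisfies `ẍ + Γ₁(t) ẋ + Γ₀(t) ∇f(x) = 0` on `I` if and
only if `(q, p) := (x, -p₀ ẋ)` satisfies the non-autonomous Hamiltonian system
`q̇ᵃ = -pₐ/p₀`, `ṗₐ = p₀ Γ₀(t) (∂f/∂qᵃ)(q)` on `I`. -/
theorem general_second_order_ode_as_hamiltonian_system
    (d : ℕ) (hd : 1 ≤ d) (α β : ℝ) (hα : 0 ≤ α)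
    (Γ₀ Γ₁ : ℝ → ℝ)
    (hΓ₀ : ContinuousOn Γ₀ (Set.Ioo α β)) (hΓ₁ : ContinuousOn Γ₁ (Set.Ioo α β))
    (f : (Fin d → ℝ) → ℝ) (hf : ContDiff ℝ 1 f)
    (p0 : ℝ → ℝ)
    (hp0ne : ∀ t ∈ Set.Ioo α β, p0 t ≠ 0)
    (hp0 : ∀ t ∈ Set.Ioo α β, HasDerivAt p0 (Γ₁ t * p0 t) t)
    (x : ℝ → Fin d → ℝ)
    -- x is twice differentiable on I:
    (hx1 : ∀ t ∈ Set.Ioo α β, ∀ a : Fin d, DifferentiableAt ℝ (fun s => x s a) t)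
    (hx2 : ∀ t ∈ Set.Ioo α β, ∀ a : Fin d,
      DifferentiableAt ℝ (fun s => deriv (fun u => x u a) s) t) :
    -- the ODE  ẍ + Γ₁ ẋ + Γ₀ ∇f(x) = 0  on I …
    (∀ t ∈ Set.Ioo α β, ∀ a : Fin d,
      HasDerivAt (fun s => deriv (fun u => x u a) s)
        (-(Γ₁ t * deriv (fun u => x u a) t)
          - Γ₀ t * deriv (fun s : ℝ => f (Function.update (x t) a s)) (x t a)) t)
    ↔
    -- … iff  (q, p) = (x, -p₀ ẋ)  solves the Hamiltonian system
    (∀ t ∈ Set.Ioo α β, ∀ a : Fin d,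
      HasDerivAt (fun s => x s a)
        (-(-(p0 t) * deriv (fun u => x u a) t) / p0 t) t ∧
      HasDerivAt (fun s => -(p0 s) * deriv (fun u => x u a) s)
        (p0 t * Γ₀ t *
          deriv (fun s : ℝ => f (Function.update (x t) a s)) (x t a)) t) :=
  general_second_order_ode_as_hamiltonian_system_general d α β Γ₀ Γ₁ f p0 hp0ne hp0 x hx1
end

section
/- Let d ≥ 1, σ ≥ 2, c ≠ 0, and let J ⊆ (0, ∞) be an interval. Suppose q, p : J → ℝ^d are differentiable and satisfy the Hamiltonian system of H_K^Z, namely (d/dt)qᵃ(s) = −pₐ(s)/(c · s^{2σ+1}) and (d/dt)pₐ(s) = 0 for all s ∈ J and a = 1, …, d. Then for every t ∈ J and τ > 0 with t + τ ∈ J: pₐ(t + τ) = pₐ(t) and qᵃ(t + τ) = qᵃ(t) + (pₐ(t)/(2σc)) · [(t + τ)^{−2σ} − t^{−2σ}] for a = 1, …, d. -/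
/-!
Since `ṗ = 0`, the momentum is constant along the interval, and then
`q̇ᵃ = -pₐ(t)/(c s^(2σ+1))` has the explicit primitive `pₐ(t)/(2σc) · s^(-2σ)`;
a function with vanishing derivative on a convex set is constant there.
-/

open Real

theorem Convex.eq_of_forall_hasDerivAt_zero {E : Type*} [NormedAddCommGroup E]
    [NormedSpace ℝ E] {s : Set ℝ} {f : ℝ → E} (hs : Convex ℝ s)
    (hf : ∀ x ∈ s, HasDerivAt f 0 x) {x y : ℝ} (hx : x ∈ s) (hy : y ∈ s) : f x = f y := by
  have h := hs.norm_image_sub_le_of_norm_hasDerivWithin_le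
    (fun z hz => (hf z hz).hasDerivWithinAt) (fun _ _ => norm_zero.le) hx hy
  rw [zero_mul, norm_le_zero_iff, sub_eq_zero] at h
  exact h.symm

theorem Real.hasDerivAt_rpow_neg {x : ℝ} (hx : 0 < x) (r : ℝ) :
    HasDerivAt (fun u : ℝ => u ^ (-r)) (-r / x ^ (r + 1)) x := by
  have h := hasDerivAt_rpow_const (p := -r) (Or.inl hx.ne')
  rwa [show -r - 1 = -(r + 1) by ring, rpow_neg hx.le, ← div_eq_mul_inv] at h

theorem flow_of_HK_general
    (d : ℕ) (σ c : ℝ) (hσ : 2 ≤ σ)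
    (J : Set ℝ) (hJ : J ⊆ Set.Ioi 0) (hJconv : Convex ℝ J)
    (q p : ℝ → Fin d → ℝ)
    (hq : ∀ s ∈ J, ∀ a : Fin d,
      HasDerivAt (fun u => q u a) (-(p s a) / (c * s ^ (2 * σ + 1))) s)
    (hp : ∀ s ∈ J, ∀ a : Fin d, HasDerivAt (fun u => p u a) 0 s) :
    ∀ t ∈ J, ∀ τ > (0 : ℝ), t + τ ∈ J → ∀ a : Fin d,
      p (t + τ) a = p t a ∧
      q (t + τ) a = q t a
        + p t a / (2 * σ * c) * ((t + τ) ^ (-(2 * σ)) - t ^ (-(2 * σ))) := by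
  intro t ht τ _ htτ a
  have hp_const : ∀ s ∈ J, p s a = p t a := fun s hs =>
    hJconv.eq_of_forall_hasDerivAt_zero (fun u hu => hp u hu a) hs ht
  refine ⟨hp_const _ htτ, ?_⟩
  have hσ0 : σ ≠ 0 := by linarith
  have hprimitive : ∀ s ∈ J, HasDerivAt
      (fun u => q u a - p t a / (2 * σ * c) * u ^ (-(2 * σ))) 0 s := by
    intro s hs
    refine ((hq s hs a).sub ((hasDerivAt_rpow_neg (hJ hs) (2 * σ)).const_mul _)).congr_deriv ?_
    rw [hp_const s hs]
    field_simp
    ring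
  have := hJconv.eq_of_forall_hasDerivAt_zero hprimitive htτ ht
  linarith

/-- **Lemma 8, `H_K^Z` half.** Along any solution of the Hamiltonian system of
`H_K^Z(p,t) = -(1/(2 c t^(2σ+1))) Σₐ pₐ²`, i.e. `q̇ᵃ = -pₐ/(c t^(2σ+1))`, `ṗₐ = 0`,
on an interval `J ⊆ (0, ∞)`, the flow from `t` to `t + τ` is given in closed form:
`pₐ(t+τ) = pₐ(t)` and
`qᵃ(t+τ) = qᵃ(t) + (pₐ(t)/(2σc)) [(t+τ)^(-2σ) - t^(-2σ)]`. -/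
theorem flow_of_HK
    (d : ℕ) (hd : 1 ≤ d) (σ c : ℝ) (hσ : 2 ≤ σ) (hc : c ≠ 0)
    (J : Set ℝ) (hJ : J ⊆ Set.Ioi 0) (hJconv : Convex ℝ J)
    (q p : ℝ → Fin d → ℝ)
    (hq : ∀ s ∈ J, ∀ a : Fin d,
      HasDerivAt (fun u => q u a) (-(p s a) / (c * s ^ (2 * σ + 1))) s)
    (hp : ∀ s ∈ J, ∀ a : Fin d, HasDerivAt (fun u => p u a) 0 s) :
    ∀ t ∈ J, ∀ τ > (0 : ℝ), t + τ ∈ J → ∀ a : Fin d,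
      p (t + τ) a = p t a ∧
      q (t + τ) a = q t a
        + p t a / (2 * σ * c) * ((t + τ) ^ (-(2 * σ)) - t ^ (-(2 * σ))) :=
  flow_of_HK_general d σ c hσ J hJ hJconv q p hq hp
end

section
/- Let d ≥ 1, σ ≥ 2, c ≠ 0, and let f : ℝ^d → ℝ be twice continuously differentiable with gradient ∇f. Fix t > 0 and suppose q, p : I → ℝ^d is a twice continuously differentiable solution, on an open interval I containing t, of the reduced Hamiltonian system (d/ds)qᵃ(s) = −pₐ(s)/(c s^{2σ+1}), (d/ds)pₐ(s) = σ² c s^{3σ−1} (∂f/∂qᵃ)(q(s)). For τ > 0 define the one-step first-order splitting update (q′(τ), p′(τ)) by: q′ = q(t) + (1/(2σc)) [(t+τ)^{−2σ} − t^{−2σ}] · p(t), and p′ = p(t) + (σc/3) [(t+τ)^{3σ} − t^{3σ}] · ∇f(q′). Then the local error satisfies ‖(q(t+τ), p(t+τ)) − (q′(τ), p′(τ))‖ = O(τ²) as τ → 0⁺. -/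
/-- Position update of the first-order splitting integrator (exact flow of `H_K^Z`
over a full step): `q′ = q(t) + (1/(2σc)) [(t+τ)^(-2σ) - t^(-2σ)] p(t)`. -/
noncomputable def si1Q (d : ℕ) (σ c t : ℝ) (q p : ℝ → Fin d → ℝ) (τ : ℝ) :
    Fin d → ℝ :=
  fun a => q t a
    + 1 / (2 * σ * c) * ((t + τ) ^ (-(2 * σ)) - t ^ (-(2 * σ))) * p t a

/-- Momentum update of the first-order splitting integrator (exact flow of `H_V^Z`
over a full step, evaluated at the updated position `q′`):
`p′ = p(t) + (σc/3) [(t+τ)^(3σ) - t^(3σ)] ∇f(q′)`. -/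
noncomputable def si1P (d : ℕ) (σ c t : ℝ) (f : (Fin d → ℝ) → ℝ)
    (q p : ℝ → Fin d → ℝ) (τ : ℝ) : Fin d → ℝ :=
  fun a => p t a
    + σ * c / 3 * ((t + τ) ^ (3 * σ) - t ^ (3 * σ)) *
      deriv (fun s : ℝ => f (Function.update (si1Q d σ c t q p τ) a s))
        (si1Q d σ c t q p τ a)

open Asymptotics Filter Set Topology

/-! Both components of the local error vanish at `τ = 0`, so by the mean value theorem it is
enough that their `τ`-derivatives are `O(τ)`. The kinetic flow freezes the momentum at `p(t)`,
so the derivative of the position error is `-(t+τ)^(-(2σ+1))/c • (p(t+τ) - p(t)) = O(τ)`.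
Writing `p′ = p(t) + u(τ) • ∇f(q′(τ))` with `u' = σ²c(t+τ)^(3σ-1)`, replacing `∇f(q′(τ))` by
`∇f(q(t))` costs `u(τ) • O(τ) = O(τ²)`, and what is left has derivative
`u'(τ) • (∇f(q(t+τ)) - ∇f(q(t))) = O(τ)`. -/

section MeanValue

variable {F : Type*} [NormedAddCommGroup F] [NormedSpace ℝ F]

theorem isBigO_sq_of_hasDerivAt {E E' : ℝ → F} (hE0 : E 0 = 0)
    (hE : ∀ᶠ s in 𝓝 0, HasDerivAt E (E' s) s) (hE' : E' =O[𝓝 0] fun s => s) :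
    E =O[𝓝 0] fun τ => τ ^ 2 := by
  obtain ⟨C, hC0, hC⟩ := hE'.exists_pos
  obtain ⟨ε, hε, hball⟩ := Metric.eventually_nhds_iff_ball.1 (hE.and hC.bound)
  refine IsBigO.of_bound C (Metric.eventually_nhds_iff_ball.2 ⟨ε, hε, fun τ hτ => ?_⟩)
  have hsub : Metric.closedBall 0 ‖τ‖ ⊆ Metric.ball (0 : ℝ) ε :=
    Metric.closedBall_subset_ball (by simpa using hτ)
  have hbound : ∀ s ∈ Metric.closedBall (0 : ℝ) ‖τ‖, ‖E' s‖ ≤ C * ‖τ‖ := fun s hs =>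
    (hball s (hsub hs)).2.trans (mul_le_mul_of_nonneg_left (by simpa using hs) hC0.le)
  have := (convex_closedBall 0 ‖τ‖).norm_image_sub_le_of_norm_hasDerivWithin_le
    (fun s hs => (hball s (hsub hs)).1.hasDerivWithinAt) hbound
    (Metric.mem_closedBall_self (norm_nonneg τ)) (by simp : τ ∈ Metric.closedBall 0 ‖τ‖)
  rw [hE0, sub_zero, sub_zero] at this
  simpa [sq, mul_assoc] using this

theorem isBigO_sq_of_hasDerivAt_smul_sub {E g : ℝ → F} {w : ℝ → ℝ} (hE0 : E 0 = 0)
    (hE : ∀ᶠ s in 𝓝 0, HasDerivAt E (w s • (g s - g 0)) s) (hw : ContinuousAt w 0)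
    (hg : DifferentiableAt ℝ g 0) : E =O[𝓝 0] fun τ => τ ^ 2 :=
  isBigO_sq_of_hasDerivAt hE0 hE <| by
    simpa using (hw.isBigO_one ℝ).smul hg.isBigO_sub

end MeanValue

section PartialGrad

variable {ι : Type*} [Fintype ι] [DecidableEq ι]

/-- `(∂f/∂xᵃ)(x)` as the derivative of `f` along the `a`-th coordinate line, the form used by
`si1P` and by the equations of motion (Mathlib's `gradient` needs an inner product space). -/
noncomputable def partialGrad (f : (ι → ℝ) → ℝ) (x : ι → ℝ) : ι → ℝ :=
  fun a => deriv (fun s : ℝ => f (Function.update x a s)) (x a)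

theorem partialGrad_eq_fderiv {f : (ι → ℝ) → ℝ} {x : ι → ℝ} (hf : DifferentiableAt ℝ f x) :
    partialGrad f x = fun a => fderiv ℝ f x (Pi.single a 1) := by
  funext a
  have hf' : DifferentiableAt ℝ f (Function.update x a (x a)) := by
    rwa [Function.update_eq_self]
  exact (hf'.hasFDerivAt.comp_hasDerivAt (x a) (hasDerivAt_update x a (x a))).deriv.trans
    (by rw [Function.update_eq_self])

theorem ContDiff.differentiable_partialGrad {f : (ι → ℝ) → ℝ} (hf : ContDiff ℝ 2 f) :
    Differentiable ℝ (partialGrad f) := by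
  have hf1 : Differentiable ℝ f := hf.differentiable (by norm_num)
  rw [show partialGrad f = fun x a => fderiv ℝ f x (Pi.single a 1) from
    funext fun x => partialGrad_eq_fderiv (hf1 x)]
  exact differentiable_pi.2 fun a =>
    ((hf.fderiv_right (m := 1) le_rfl).differentiable one_ne_zero).clm_apply
      (differentiable_const _)

end PartialGrad

theorem hasDerivAt_rpow_const_add {t s : ℝ} (y : ℝ) (h : t + s ≠ 0) :
    HasDerivAt (fun τ => (t + τ) ^ y) (y * (t + s) ^ (y - 1)) s := by
  simpa using ((hasDerivAt_id s).const_add t).rpow_const (p := y) (Or.inl h)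

section Integrator

variable {d : ℕ} {σ c t : ℝ} {q p : ℝ → Fin d → ℝ}

theorem si1Q_zero : si1Q d σ c t q p 0 = q t := by
  funext a
  simp [si1Q]

theorem si1Q_eq (τ : ℝ) : si1Q d σ c t q p τ =
    q t + (1 / (2 * σ * c) * ((t + τ) ^ (-(2 * σ)) - t ^ (-(2 * σ)))) • p t :=
  rfl

theorem si1P_eq (f : (Fin d → ℝ) → ℝ) (τ : ℝ) : si1P d σ c t f q p τ =
    p t + (σ * c / 3 * ((t + τ) ^ (3 * σ) - t ^ (3 * σ))) •
      partialGrad f (si1Q d σ c t q p τ) :=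
  rfl

theorem hasDerivAt_si1Q (hσ : σ ≠ 0) {s : ℝ} (hs : 0 < t + s) :
    HasDerivAt (si1Q d σ c t q p) ((-(t + s) ^ (-(2 * σ + 1)) / c) • p t) s := by
  have h := ((((hasDerivAt_rpow_const_add (-(2 * σ)) hs.ne').sub_const
    (t ^ (-(2 * σ)))).const_mul (1 / (2 * σ * c))).smul_const (p t)).const_add (q t)
  rw [show si1Q d σ c t q p = _ from funext si1Q_eq]
  refine h.congr_deriv ?_
  congr 1
  rw [show -(2 * σ) - 1 = -(2 * σ + 1) by ring, one_div, mul_inv, mul_inv]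
  field_simp

theorem differentiableAt_si1Q {s : ℝ} (hs : t + s ≠ 0) :
    DifferentiableAt ℝ (si1Q d σ c t q p) s := by
  rw [show si1Q d σ c t q p = _ from funext si1Q_eq]
  fun_prop (disch := exact Or.inl hs)

theorem isBigO_sub_si1Q (hσ : σ ≠ 0) (ht : 0 < t)
    (hq : ∀ᶠ s in 𝓝 t, HasDerivAt q ((-s ^ (-(2 * σ + 1)) / c) • p s) s)
    (hp : DifferentiableAt ℝ p t) :
    (fun τ => q (t + τ) - si1Q d σ c t q p τ) =O[𝓝 0] fun τ => τ ^ 2 := by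
  have hshift : Tendsto (t + ·) (𝓝 0) (𝓝 t) := by
    simpa using (continuous_const_add t).tendsto 0
  refine isBigO_sq_of_hasDerivAt_smul_sub (g := fun s => p (t + s))
    (w := fun s => -(t + s) ^ (-(2 * σ + 1)) / c) (by simp [si1Q_zero]) ?_ ?_ ?_
  · filter_upwards [hshift.eventually hq, hshift.eventually (lt_mem_nhds ht)] with s hqs hs
    have := (hqs.scomp s ((hasDerivAt_id s).const_add t)).sub
      (hasDerivAt_si1Q (c := c) (q := q) (p := p) hσ hs)
    rw [one_smul, ← smul_sub] at this
    rw [add_zero]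
    exact this
  · exact (((continuous_const_add t).continuousAt.rpow_const
      (Or.inl (by simpa using ht.ne'))).neg.div_const c)
  · exact (by simpa using hp : DifferentiableAt ℝ p (t + 0)).comp 0
      (differentiableAt_id.const_add t)

theorem isBigO_sub_si1P {f : (Fin d → ℝ) → ℝ} (hf : ContDiff ℝ 2 f) (ht : 0 < t)
    (hp : ∀ᶠ s in 𝓝 t, HasDerivAt p ((σ ^ 2 * c * s ^ (3 * σ - 1)) • partialGrad f (q s)) s)
    (hq : DifferentiableAt ℝ q t) :
    (fun τ => p (t + τ) - si1P d σ c t f q p τ) =O[𝓝 0] fun τ => τ ^ 2 := by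
  set u : ℝ → ℝ := fun τ => σ * c / 3 * ((t + τ) ^ (3 * σ) - t ^ (3 * σ))
  have hshift : Tendsto (t + ·) (𝓝 0) (𝓝 t) := by
    simpa using (continuous_const_add t).tendsto 0
  have hu : ∀ s, 0 < t + s → HasDerivAt u (σ ^ 2 * c * (t + s) ^ (3 * σ - 1)) s := fun s hs =>
    (((hasDerivAt_rpow_const_add (3 * σ) hs.ne').sub_const _).const_mul _).congr_deriv
      (by ring)
  have hG := hf.differentiable_partialGrad
  have hsplit : (fun τ => p (t + τ) - si1P d σ c t f q p τ) = fun τ =>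
      (p (t + τ) - (p t + u τ • partialGrad f (q t))) +
        u τ • (partialGrad f (q t) - partialGrad f (si1Q d σ c t q p τ)) := by
    funext τ
    rw [si1P_eq, smul_sub]
    abel
  rw [hsplit]
  refine IsBigO.add ?_ ?_
  · refine isBigO_sq_of_hasDerivAt_smul_sub (g := fun s => partialGrad f (q (t + s)))
      (w := fun s => σ ^ 2 * c * (t + s) ^ (3 * σ - 1)) (by simp [u]) ?_ ?_ ?_
    · filter_upwards [hshift.eventually hp, hshift.eventually (lt_mem_nhds ht)] with s hps hs
      have := (hps.scomp s ((hasDerivAt_id s).const_add t)).sub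
        (((hu s hs).smul_const (partialGrad f (q t))).const_add (p t))
      rw [one_smul, ← smul_sub] at this
      rw [add_zero]
      exact this
    · exact continuousAt_const.mul ((continuous_const_add t).continuousAt.rpow_const
        (Or.inl (by simpa using ht.ne')))
    · exact (hG _).comp 0 ((by simpa using hq : DifferentiableAt ℝ q (t + 0)).comp 0
        (differentiableAt_id.const_add t))
  · have hu0 : u =O[𝓝 0] fun τ => τ := by
      simpa [u] using (hu 0 (by simpa using ht)).differentiableAt.isBigO_sub
    have hG0 : (fun τ => partialGrad f (q t) - partialGrad f (si1Q d σ c t q p τ))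
        =O[𝓝 0] fun τ => τ := by
      simpa [si1Q_zero] using ((hG _).comp 0
        (differentiableAt_si1Q (by simpa using ht.ne'))).isBigO_sub.neg_left
    simpa [sq] using hu0.smul hG0

end Integrator

theorem si1_local_error_order_two_general
    (d : ℕ) (σ c : ℝ) (hσ : 2 ≤ σ)
    (f : (Fin d → ℝ) → ℝ) (hf : ContDiff ℝ 2 f)
    (α β t : ℝ) (ht : t ∈ Set.Ioo α β) (hI : Set.Ioo α β ⊆ Set.Ioi 0)
    (q p : ℝ → Fin d → ℝ)
    (hq : ∀ s ∈ Set.Ioo α β, ∀ a : Fin d,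
      HasDerivAt (fun u => q u a) (-(p s a) / (c * s ^ (2 * σ + 1))) s)
    (hp : ∀ s ∈ Set.Ioo α β, ∀ a : Fin d,
      HasDerivAt (fun u => p u a)
        (σ ^ 2 * c * s ^ (3 * σ - 1) *
          deriv (fun r : ℝ => f (Function.update (q s) a r)) (q s a)) s) :
    (fun τ : ℝ =>
        ((q (t + τ) - si1Q d σ c t q p τ, p (t + τ) - si1P d σ c t f q p τ) :
          (Fin d → ℝ) × (Fin d → ℝ)))
      =O[nhdsWithin 0 (Set.Ioi 0)] fun τ : ℝ => τ ^ 2 := by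
  have ht0 : 0 < t := hI ht
  have hnear : ∀ᶠ s in 𝓝 t, s ∈ Ioo α β := isOpen_Ioo.mem_nhds ht
  have hqD : ∀ᶠ s in 𝓝 t, HasDerivAt q ((-s ^ (-(2 * σ + 1)) / c) • p s) s := by
    filter_upwards [hnear] with s hs
    refine hasDerivAt_pi.2 fun a => (hq s hs a).congr_deriv ?_
    rw [Real.rpow_neg (hI hs).le, Pi.smul_apply, smul_eq_mul]
    ring
  have hpD : ∀ᶠ s in 𝓝 t,
      HasDerivAt p ((σ ^ 2 * c * s ^ (3 * σ - 1)) • partialGrad f (q s)) s :=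
    hnear.mono fun s hs => hasDerivAt_pi.2 (hp s hs)
  refine (IsBigO.prod_left ?_ ?_).mono nhdsWithin_le_nhds
  · exact isBigO_sub_si1Q (by positivity) ht0 hqD hpD.self_of_nhds.differentiableAt
  · exact isBigO_sub_si1P hf ht0 hpD hqD.self_of_nhds.differentiableAt

/-- **First-order splitting integrator: local error `O(τ²)`.** Along a `C²`
solution of the reduced Hamiltonian system `q̇ᵃ = -pₐ/(c s^(2σ+1))`,
`ṗₐ = σ² c s^(3σ-1) (∂f/∂qᵃ)(q)`, the one-step update `(q′, p′)` of the
first-order splitting scheme satisfies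
`‖(q(t+τ), p(t+τ)) - (q′(τ), p′(τ))‖ = O(τ²)` as `τ → 0⁺`. -/
theorem si1_local_error_order_two
    (d : ℕ) (hd : 1 ≤ d) (σ c : ℝ) (hσ : 2 ≤ σ) (hc : c ≠ 0)
    (f : (Fin d → ℝ) → ℝ) (hf : ContDiff ℝ 2 f)
    (α β t : ℝ) (ht : t ∈ Set.Ioo α β) (hI : Set.Ioo α β ⊆ Set.Ioi 0)
    (q p : ℝ → Fin d → ℝ)
    (hq2 : ContDiffOn ℝ 2 q (Set.Ioo α β))
    (hp2 : ContDiffOn ℝ 2 p (Set.Ioo α β))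
    (hq : ∀ s ∈ Set.Ioo α β, ∀ a : Fin d,
      HasDerivAt (fun u => q u a) (-(p s a) / (c * s ^ (2 * σ + 1))) s)
    (hp : ∀ s ∈ Set.Ioo α β, ∀ a : Fin d,
      HasDerivAt (fun u => p u a)
        (σ ^ 2 * c * s ^ (3 * σ - 1) *
          deriv (fun r : ℝ => f (Function.update (q s) a r)) (q s a)) s) :
    (fun τ : ℝ =>
        ((q (t + τ) - si1Q d σ c t q p τ, p (t + τ) - si1P d σ c t f q p τ) :
          (Fin d → ℝ) × (Fin d → ℝ)))
      =O[nhdsWithin 0 (Set.Ioi 0)] fun τ : ℝ => τ ^ 2 :=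
  si1_local_error_order_two_general d σ c hσ f hf α β t ht hI q p hq hp
end
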